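/- arXiv:2004.05510 — 4 statements merged into one kernel-verified Lean document; each statement's English description precedes it below -/
import Mathlib

section
/- Let a ≥ 1 be a real number, and consider the three points (0,0), (a,0), (0,1) in the Euclidean plane (the vertices of a right triangle with legs a and 1). Then the infimum over all points X of the plane of d(X,(0,0)) + d(X,(a,0)) + d(X,(0,1)) equals √(a² + a√3 + 1), where d denotes Euclidean distance. -/
/-!
If unit vectors `u i` sum to zero, then `Σ ‖X - p i‖ ≥ Σ ⟪u i, X - p i⟫ = -Σ ⟪u i, p i⟫` for every
`X`, a bound independent of `X`; it is attained at a point `F` with `F - p i` a nonnegative multiple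
of `u i`. For the right triangle with vertices `(0,0)`, `(a,0)`, `(0,1)` such an `F` is the Fermat
point, where the three directions `u i` make angles of 120°, and the distances from it to the
vertices add up to `√(a² + a√3 + 1)`.
-/

/-- Euclidean distance in the plane. -/
noncomputable def d (X Y : ℝ × ℝ) : ℝ :=
  Real.sqrt ((X.1 - Y.1) ^ 2 + (X.2 - Y.2) ^ 2)

open Finset RealInnerProductSpace

section Weber

variable {E ι : Type*} [NormedAddCommGroup E] [InnerProductSpace ℝ E] [Fintype ι]

theorem sum_inner_sub_le_sum_norm_sub {u p : ι → E} (hu : ∀ i, ‖u i‖ ≤ 1)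
    (hsum : ∑ i, u i = 0) (X Y : E) :
    ∑ i, ⟪u i, Y - p i⟫ ≤ ∑ i, ‖X - p i‖ :=
  calc ∑ i, ⟪u i, Y - p i⟫ = ⟪∑ i, u i, Y - X⟫ + ∑ i, ⟪u i, X - p i⟫ := by
        simp only [sum_inner, ← sum_add_distrib, ← inner_add_right, sub_add_sub_cancel]
    _ = ∑ i, ⟪u i, X - p i⟫ := by rw [hsum, inner_zero_left, zero_add]
    _ ≤ ∑ i, ‖X - p i‖ := sum_le_sum fun i _ =>
        (real_inner_le_norm _ _).trans (mul_le_of_le_one_left (norm_nonneg _) (hu i))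

theorem iInf_sum_norm_sub_eq {u p : ι → E} {r : ι → ℝ} {F : E} (hu : ∀ i, ‖u i‖ = 1)
    (hsum : ∑ i, u i = 0) (hr : ∀ i, 0 ≤ r i) (hF : ∀ i, F - p i = r i • u i) :
    ⨅ X, ∑ i, ‖X - p i‖ = ∑ i, r i := by
  have hnorm : ∀ i, ‖F - p i‖ = r i := fun i => by
    rw [hF, norm_smul, hu, mul_one, Real.norm_of_nonneg (hr i)]
  have hinner : ∀ i, ⟪u i, F - p i⟫ = r i := fun i => by
    rw [hF, real_inner_smul_right, real_inner_self_eq_norm_sq, hu, one_pow, mul_one]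
  have hlower : ∀ X, ∑ i, r i ≤ ∑ i, ‖X - p i‖ := fun X => by
    simpa only [hinner] using
      sum_inner_sub_le_sum_norm_sub (p := p) (fun i => (hu i).le) hsum X F
  refine le_antisymm ?_ (le_ciInf hlower)
  simpa only [hnorm] using ciInf_le ⟨_, Set.forall_mem_range.2 hlower⟩ F

end Weber

theorem d_eq_norm_sub (X Y : ℝ × ℝ) : d X Y = ‖WithLp.toLp 2 X - WithLp.toLp 2 Y‖ := by
  simp [d, WithLp.prod_norm_eq_of_L2]

theorem norm_inv_smul_toLp_eq_one {x y c : ℝ} (hc : 0 < c) (h : x ^ 2 + y ^ 2 = c ^ 2) :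
    ‖c⁻¹ • WithLp.toLp 2 (x, y)‖ = 1 := by
  rw [norm_smul, WithLp.prod_norm_eq_of_L2]
  simp [h, Real.sqrt_sq hc.le, abs_of_pos hc, hc.ne']

theorem sq_sqrt_three : √3 ^ 2 = 3 := Real.sq_sqrt (by norm_num)

namespace RightTriangle

variable (a : ℝ)

noncomputable def vertex : Fin 3 → WithLp 2 (ℝ × ℝ) :=
  ![WithLp.toLp 2 (0, 0), WithLp.toLp 2 (a, 0), WithLp.toLp 2 (0, 1)]

noncomputable def weberValue : ℝ := √(a ^ 2 + a * √3 + 1)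

noncomputable def fermatDenom : ℝ := a ^ 2 * √3 + 3 * a + √3

noncomputable def fermatPoint : WithLp 2 (ℝ × ℝ) :=
  WithLp.toLp 2 (a * (a + √3) / (2 * fermatDenom a), a * (a * √3 + 1) / (2 * fermatDenom a))

/-- Each direction is the previous one rotated by 120°. -/
noncomputable def fermatDir : Fin 3 → WithLp 2 (ℝ × ℝ) :=
  (2 * weberValue a)⁻¹ • ![WithLp.toLp 2 (a + √3, a * √3 + 1),
    WithLp.toLp 2 (-(2 * a + √3), 1), WithLp.toLp 2 (a, -(a * √3 + 2))]

noncomputable def fermatDist : Fin 3 → ℝ :=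
  (weberValue a / fermatDenom a) • ![a, a * (a * √3 + 1), a + √3]

variable {a}

lemma weberValue_sq (ha : 0 ≤ a) : weberValue a ^ 2 = a ^ 2 + a * √3 + 1 :=
  Real.sq_sqrt (by positivity)

lemma weberValue_pos (ha : 0 ≤ a) : 0 < weberValue a := Real.sqrt_pos.2 (by positivity)

lemma fermatDenom_pos (ha : 0 ≤ a) : 0 < fermatDenom a := by unfold fermatDenom; positivity

lemma norm_fermatDir (ha : 0 ≤ a) (i : Fin 3) : ‖fermatDir a i‖ = 1 := by
  have hL := weberValue_sq ha
  have hs := sq_sqrt_three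
  have h2L : 0 < 2 * weberValue a := by linarith [weberValue_pos ha]
  fin_cases i <;> refine norm_inv_smul_toLp_eq_one h2L ?_
  · linear_combination (1 + a ^ 2) * hs - 4 * hL
  · linear_combination hs - 4 * hL
  · linear_combination a ^ 2 * hs - 4 * hL

lemma sum_fermatDir : ∑ i, fermatDir a i = 0 := by
  rw [WithLp.ext_iff]
  simp only [fermatDir, Fin.sum_univ_three, Pi.smul_apply, Matrix.cons_val, ← smul_add,
    WithLp.ofLp_add, WithLp.ofLp_smul, WithLp.ofLp_zero, Prod.mk_add_mk, Prod.smul_mk,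
    Prod.mk_eq_zero, smul_eq_mul]
  constructor <;> ring

lemma fermatDist_nonneg (ha : 0 ≤ a) (i : Fin 3) : 0 ≤ fermatDist a i := by
  have hL := weberValue_pos ha
  have hD := fermatDenom_pos ha
  fin_cases i <;> simp only [fermatDist, Pi.smul_apply, smul_eq_mul, Fin.zero_eta, Fin.mk_one,
    Fin.reduceFinMk, Matrix.cons_val_zero, Matrix.cons_val_one, Matrix.cons_val] <;> positivity

lemma fermatPoint_sub_vertex (ha : 0 ≤ a) (i : Fin 3) :
    fermatPoint a - vertex a i = fermatDist a i • fermatDir a i := by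
  have hL := (weberValue_pos ha).ne'
  have hD := (fermatDenom_pos ha).ne'
  have hs := sq_sqrt_three
  rw [WithLp.ext_iff]
  fin_cases i <;>
    simp only [fermatPoint, vertex, fermatDist, fermatDir, Fin.zero_eta, Fin.mk_one,
      Fin.reduceFinMk, Matrix.cons_val_zero, Matrix.cons_val_one, Matrix.cons_val, Pi.smul_apply,
      smul_eq_mul, WithLp.ofLp_sub, WithLp.ofLp_smul, Prod.mk_sub_mk, Prod.smul_mk,
      Prod.mk.injEq, sub_zero] <;>
    constructor <;> field_simp <;> unfold fermatDenom
  · linear_combination a ^ 2 * hs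
  · linear_combination a * hs

lemma sum_fermatDist (ha : 0 ≤ a) : ∑ i, fermatDist a i = weberValue a := by
  have hD := (fermatDenom_pos ha).ne'
  simp only [fermatDist, Fin.sum_univ_three, Pi.smul_apply, smul_eq_mul, Matrix.cons_val,
    ← mul_add]
  field_simp
  unfold fermatDenom
  ring

theorem iInf_sum_norm_sub_vertex (ha : 0 ≤ a) :
    ⨅ X, ∑ i, ‖X - vertex a i‖ = weberValue a := by
  rw [iInf_sum_norm_sub_eq (norm_fermatDir ha) sum_fermatDir (fermatDist_nonneg ha)
    (fermatPoint_sub_vertex ha), sum_fermatDist ha]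

end RightTriangle

/-- For `a ≥ 1`, the infimum of the Weber objective for the vertices
`(0,0)`, `(a,0)`, `(0,1)` of a right triangle with legs `a` and `1`
equals `√(a² + a√3 + 1)`. -/
theorem weber_right_triangle (a : ℝ) (ha : 1 ≤ a) :
    (⨅ X : ℝ × ℝ, d X (0, 0) + d X (a, 0) + d X (0, 1)) =
      Real.sqrt (a ^ 2 + a * Real.sqrt 3 + 1) :=
  calc (⨅ X : ℝ × ℝ, d X (0, 0) + d X (a, 0) + d X (0, 1))
      = ⨅ X : ℝ × ℝ, ∑ i, ‖WithLp.toLp 2 X - RightTriangle.vertex a i‖ := by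
        simp [d_eq_norm_sub, Fin.sum_univ_three, RightTriangle.vertex, add_assoc]
    _ = ⨅ X, ∑ i, ‖X - RightTriangle.vertex a i‖ :=
        (WithLp.toLp_surjective 2).iInf_comp fun X => ∑ i, ‖X - RightTriangle.vertex a i‖
    _ = RightTriangle.weberValue a :=
        RightTriangle.iInf_sum_norm_sub_vertex (zero_le_one.trans ha)
end

section
/- The infimum over all points X of the Euclidean plane of d(X,(0,0)) + d(X,(1,0)) + d(X,(0,1)) equals √(2 + √3), where d denotes Euclidean distance. -/
lemma cs_aux (a b u v : ℝ) (h : u ^ 2 + v ^ 2 = 1) :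
    u * a + v * b ≤ Real.sqrt (a ^ 2 + b ^ 2) := by
  have h1 : (u * a + v * b) ^ 2 ≤ a ^ 2 + b ^ 2 := by nlinarith [sq_nonneg (u * b - v * a)]
  calc u * a + v * b ≤ |u * a + v * b| := le_abs_self _
    _ = Real.sqrt ((u * a + v * b) ^ 2) := (Real.sqrt_sq_eq_abs _).symm
    _ ≤ Real.sqrt (a ^ 2 + b ^ 2) := Real.sqrt_le_sqrt h1

lemma sqrt26 : Real.sqrt 2 * Real.sqrt 6 = 2 * Real.sqrt 3 := by
  rw [← Real.sqrt_mul (by norm_num : (0:ℝ) ≤ 2)]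
  rw [show (2:ℝ) * 6 = 2 ^ 2 * 3 by norm_num, Real.sqrt_mul (by positivity),
    Real.sqrt_sq (by norm_num)]

lemma sqrt23 : Real.sqrt 2 * Real.sqrt 3 = Real.sqrt 6 := by
  rw [← Real.sqrt_mul (by norm_num : (0:ℝ) ≤ 2)]; norm_num

/-- The infimum of the Weber objective for the vertices `(0,0)`, `(1,0)`, `(0,1)`
of a right isosceles triangle equals `√(2 + √3)`. -/
theorem weber_unit_triangle :
    (⨅ X : ℝ × ℝ, d X (0, 0) + d X (1, 0) + d X (0, 1)) =
      Real.sqrt (2 + Real.sqrt 3) := by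
  set s2 := Real.sqrt 2 with hs2
  set s3 := Real.sqrt 3 with hs3
  set s6 := Real.sqrt 6 with hs6
  have h2 : s2 ^ 2 = 2 := Real.sq_sqrt (by norm_num)
  have h3 : s3 ^ 2 = 3 := Real.sq_sqrt (by norm_num)
  have h6 : s6 ^ 2 = 6 := Real.sq_sqrt (by norm_num)
  have h2n : 0 ≤ s2 := Real.sqrt_nonneg _
  have h3n : 0 ≤ s3 := Real.sqrt_nonneg _
  have h6n : 0 ≤ s6 := Real.sqrt_nonneg _
  have h26 : s2 * s6 = 2 * s3 := sqrt26
  have h23 : s2 * s3 = s6 := sqrt23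
  have h3lt : s3 < 2 := by nlinarith
  set m : ℝ := (s2 + s6) / 2 with hm
  -- target value equals m
  have hms : Real.sqrt (2 + s3) = m := by
    have hsq : m ^ 2 = 2 + s3 := by
      rw [hm]; linear_combination h2 / 4 + h6 / 4 + h26 / 2
    rw [← hsq, Real.sqrt_sq (by positivity)]
  -- lower bound
  have hlb : ∀ X : ℝ × ℝ, m ≤ d X (0, 0) + d X (1, 0) + d X (0, 1) := by
    intro ⟨x, y⟩
    have e1 : (s2 / 2) * (x - 0) + (s2 / 2) * (y - 0) ≤ d (x, y) (0, 0) :=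
      cs_aux _ _ _ _ (by linear_combination h2 / 2)
    have e2 : (-((s6 + s2) / 4)) * (x - 1) + ((s6 - s2) / 4) * (y - 0) ≤ d (x, y) (1, 0) :=
      cs_aux _ _ _ _ (by linear_combination h6 / 8 + h2 / 8)
    have e3 : ((s6 - s2) / 4) * (x - 0) + (-((s6 + s2) / 4)) * (y - 1) ≤ d (x, y) (0, 1) :=
      cs_aux _ _ _ _ (by linear_combination h6 / 8 + h2 / 8)
    have hsum := add_le_add (add_le_add e1 e2) e3
    have heq : (s2 / 2) * (x - 0) + (s2 / 2) * (y - 0)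
        + ((-((s6 + s2) / 4)) * (x - 1) + ((s6 - s2) / 4) * (y - 0))
        + (((s6 - s2) / 4) * (x - 0) + (-((s6 + s2) / 4)) * (y - 1)) = m := by
      rw [hm]; ring
    linarith
  -- value at the Fermat point
  set t : ℝ := (3 - s3) / 6 with ht
  have htpos : 0 < t := by rw [ht]; linarith
  have hd1 : d (t, t) (0, 0) = t * s2 := by
    have : (t - 0) ^ 2 + (t - 0) ^ 2 = (t * s2) ^ 2 := by
      linear_combination (-t ^ 2) * h2
    show Real.sqrt ((t - 0) ^ 2 + (t - 0) ^ 2) = t * s2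
    rw [this, Real.sqrt_sq (by positivity)]
  have hd2 : d (t, t) (1, 0) = s6 / 3 := by
    have : (t - 1) ^ 2 + (t - 0) ^ 2 = (s6 / 3) ^ 2 := by
      rw [ht]; linear_combination h3 / 18 - h6 / 9
    show Real.sqrt ((t - 1) ^ 2 + (t - 0) ^ 2) = s6 / 3
    rw [this, Real.sqrt_sq (by positivity)]
  have hd3 : d (t, t) (0, 1) = s6 / 3 := by
    have : (t - 0) ^ 2 + (t - 1) ^ 2 = (s6 / 3) ^ 2 := by
      rw [ht]; linear_combination h3 / 18 - h6 / 9
    show Real.sqrt ((t - 0) ^ 2 + (t - 1) ^ 2) = s6 / 3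
    rw [this, Real.sqrt_sq (by positivity)]
  have hF : d (t, t) (0, 0) + d (t, t) (1, 0) + d (t, t) (0, 1) = m := by
    rw [hd1, hd2, hd3, hm, ht]; linear_combination (-1 / 6 : ℝ) * h23
  rw [hms]
  refine le_antisymm ?_ (le_ciInf hlb)
  calc (⨅ X : ℝ × ℝ, d X (0, 0) + d X (1, 0) + d X (0, 1))
      ≤ d (t, t) (0, 0) + d (t, t) (1, 0) + d (t, t) (0, 1) :=
        ciInf_le ⟨m, fun z hz => by obtain ⟨X, rfl⟩ := hz; exact hlb X⟩ _
    _ = m := hF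
end

section
/- Let a ≥ 1 and let P₁ = (0,0), P₂ = (a,0), P₃ = (0,1), P₄ = (a,1) be the four corners of an a × 1 rectangle in the Euclidean plane. Then the infimum over all pairs of points (X₁, X₂) ∈ ℝ² × ℝ² of ∑_{i=1}^{4} min{ d(X₁, Pᵢ), d(X₂, Pᵢ) } equals min{ 2, √(a² + a√3 + 1) }, where d denotes Euclidean distance. -/
open Finset Complex
open scoped RealInnerProductSpace

section DualCertificate

variable {E ι : Type*} [NormedAddCommGroup E] [InnerProductSpace ℝ E] {s : Finset ι} {u P : ι → E}

theorem sum_inner_eq_sum_inner_sub (hu : ∑ i ∈ s, u i = 0) (z : E) :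
    ∑ i ∈ s, ⟪u i, P i⟫ = ∑ i ∈ s, ⟪u i, P i - z⟫ := by
  simp only [inner_sub_right, sum_sub_distrib, ← sum_inner, hu, inner_zero_left, sub_zero]

theorem sum_inner_le_sum_norm_mul_dist (hu : ∑ i ∈ s, u i = 0) (z : E) :
    ∑ i ∈ s, ⟪u i, P i⟫ ≤ ∑ i ∈ s, ‖u i‖ * dist z (P i) := by
  rw [sum_inner_eq_sum_inner_sub hu z]
  gcongr with i
  rw [dist_comm, dist_eq_norm]
  exact real_inner_le_norm _ _

theorem sum_inner_eq_sum_norm_mul_dist (hu : ∑ i ∈ s, u i = 0) {z : E}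
    (hz : ∀ i ∈ s, ∃ t : ℝ, 0 ≤ t ∧ P i - z = t • u i) :
    ∑ i ∈ s, ⟪u i, P i⟫ = ∑ i ∈ s, ‖u i‖ * dist z (P i) := by
  rw [sum_inner_eq_sum_inner_sub hu z]
  refine sum_congr rfl fun i hi => ?_
  obtain ⟨t, ht, hPz⟩ := hz i hi
  rw [dist_comm, dist_eq_norm, hPz, inner_smul_right, real_inner_self_eq_norm_sq, norm_smul,
    Real.norm_of_nonneg ht]
  ring

end DualCertificate

section FourPoints

variable {α ι : Type*} [PseudoMetricSpace α] {p : ι → α}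

noncomputable def twoMedianCost [Fintype ι] (p : ι → α) (x y : α) : ℝ :=
  ∑ i, min (dist x (p i)) (dist y (p i))

theorem twoMedianCost_nonneg [Fintype ι] (x y : α) : 0 ≤ twoMedianCost p x y :=
  sum_nonneg fun _ _ => le_min dist_nonneg dist_nonneg

theorem twoMedianCost_le_sum_dist [Fintype ι] {x y : α} (f : ι → α)
    (hf : ∀ i, f i = x ∨ f i = y) : twoMedianCost p x y ≤ ∑ i, dist (f i) (p i) :=
  sum_le_sum fun i _ => by
    rcases hf i with h | h <;> rw [h]
    exacts [min_le_left _ _, min_le_right _ _]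

variable [DecidableEq ι]

theorem le_sum_dist_of_two_le_card {δ : ℝ} (hsep : Pairwise fun i j => δ ≤ dist (p i) (p j))
    {T : Finset ι} (hT : 2 ≤ T.card) (z : α) : δ ≤ ∑ i ∈ T, dist z (p i) := by
  obtain ⟨i, hi, j, hj, hij⟩ := one_lt_card.1 hT
  calc δ ≤ dist (p i) (p j) := hsep hij
    _ ≤ dist z (p i) + dist z (p j) := dist_triangle_left _ _ _
    _ = ∑ k ∈ {i, j}, dist z (p k) := by rw [sum_pair hij]
    _ ≤ ∑ k ∈ T, dist z (p k) :=
      sum_le_sum_of_subset_of_nonneg (insert_subset hi (singleton_subset_iff.2 hj))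
        fun _ _ _ => dist_nonneg

variable [Fintype ι]

theorem le_sum_dist_of_three_le_card (hι : Fintype.card ι = 4) {V : ℝ}
    (hV : ∀ z i, V ≤ ∑ j ∈ univ.erase i, dist z (p j)) {T : Finset ι} (hT : 3 ≤ T.card) (z : α) :
    V ≤ ∑ i ∈ T, dist z (p i) := by
  obtain ⟨U, hUT, hU⟩ := exists_subset_card_eq hT
  obtain ⟨i, hi⟩ := card_eq_one.1 (show Uᶜ.card = 1 by rw [card_compl, hι, hU])
  have hU : U = univ.erase i := by rw [← compl_singleton, ← hi, compl_compl]
  calc V ≤ ∑ j ∈ U, dist z (p j) := hU ▸ hV z i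
    _ ≤ ∑ j ∈ T, dist z (p j) := sum_le_sum_of_subset_of_nonneg hUT fun _ _ _ => dist_nonneg

theorem min_le_twoMedianCost (hι : Fintype.card ι = 4) {δ V : ℝ}
    (hsep : Pairwise fun i j => δ ≤ dist (p i) (p j))
    (hV : ∀ z i, V ≤ ∑ j ∈ univ.erase i, dist z (p j)) (x y : α) :
    min (2 * δ) V ≤ twoMedianCost p x y := by
  set S := univ.filter fun i => dist x (p i) ≤ dist y (p i)
  have hcost : twoMedianCost p x y = ∑ i ∈ S, dist x (p i) + ∑ i ∈ Sᶜ, dist y (p i) := by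
    rw [twoMedianCost, ← sum_add_sum_compl S]
    congr 1 <;> refine sum_congr rfl fun i hi => ?_
    · exact min_eq_left (mem_filter.1 hi).2
    · exact min_eq_right (le_of_not_ge fun h => mem_compl.1 hi (mem_filter.2 ⟨mem_univ _, h⟩))
  have hx : 0 ≤ ∑ i ∈ S, dist x (p i) := sum_nonneg fun _ _ => dist_nonneg
  have hy : 0 ≤ ∑ i ∈ Sᶜ, dist y (p i) := sum_nonneg fun _ _ => dist_nonneg
  have hcard : S.card + Sᶜ.card = 4 := by rw [card_add_card_compl, hι]
  rw [hcost]
  by_cases hS : 3 ≤ S.card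
  · linarith [min_le_right (2 * δ) V, le_sum_dist_of_three_le_card hι hV hS x]
  by_cases hSc : 3 ≤ Sᶜ.card
  · linarith [min_le_right (2 * δ) V, le_sum_dist_of_three_le_card hι hV hSc y]
  linarith [min_le_left (2 * δ) V, le_sum_dist_of_two_le_card hsep (T := S) (by omega) x,
    le_sum_dist_of_two_le_card hsep (T := Sᶜ) (by omega) y]

end FourPoints

section FermatPoint

variable {a : ℝ}

/-- `2√(a² + a√3 + 1)` times the unit vectors from the Fermat point of the triangle `0, a, I`
towards its vertices. -/
noncomputable def fermatDual (a : ℝ) : Fin 3 → ℂ :=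
  ![⟨-(a + √3), -(1 + √3 * a)⟩, ⟨2 * a + √3, -1⟩, ⟨-a, √3 * a + 2⟩]

theorem sum_fermatDual (a : ℝ) : ∑ i, fermatDual a i = 0 := by
  simp [fermatDual, Fin.sum_univ_three, Complex.ext_iff]
  constructor <;> ring

theorem norm_fermatDual (ha : 0 ≤ a) (i : Fin 3) :
    ‖fermatDual a i‖ = 2 * √(a ^ 2 + a * √3 + 1) := by
  have h3 : √3 ^ 2 = 3 := Real.sq_sqrt (by norm_num)
  rw [← sq_eq_sq₀ (norm_nonneg _) (by positivity), Complex.sq_norm, mul_pow,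
    Real.sq_sqrt (by positivity)]
  fin_cases i <;> simp [fermatDual, normSq_apply] <;>
    [linear_combination (1 + a ^ 2) * h3; linear_combination h3; linear_combination a ^ 2 * h3]

theorem sum_inner_fermatDual (ha : 0 ≤ a) :
    ∑ i, ⟪fermatDual a i, ![0, (a : ℂ), I] i⟫ =
      2 * √(a ^ 2 + a * √3 + 1) * √(a ^ 2 + a * √3 + 1) := by
  rw [mul_assoc, Real.mul_self_sqrt (by positivity)]
  simp [fermatDual, Fin.sum_univ_three, Complex.inner]
  ring

theorem sqrt_le_dist_add_dist_add_dist (ha : 0 ≤ a) (z : ℂ) :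
    √(a ^ 2 + a * √3 + 1) ≤ dist z 0 + dist z a + dist z I := by
  have h := sum_inner_le_sum_norm_mul_dist (P := ![0, (a : ℂ), I]) (sum_fermatDual a) z
  rw [sum_inner_fermatDual ha] at h
  simp only [norm_fermatDual ha, ← mul_sum] at h
  simpa [Fin.sum_univ_three] using le_of_mul_le_mul_left h (by positivity)

theorem exists_dist_add_dist_add_dist_eq_sqrt (ha : 0 ≤ a) :
    ∃ z : ℂ, dist z 0 + dist z a + dist z I = √(a ^ 2 + a * √3 + 1) := by
  have h3 : √3 ^ 2 = 3 := Real.sq_sqrt (by norm_num)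
  set D := 2 * √3 * (a ^ 2 + a * √3 + 1)
  have hD : 0 < D := by positivity
  set F : ℂ := ⟨a * (a + √3) / D, a * (1 + √3 * a) / D⟩
  have hF : ∀ i ∈ univ, ∃ t : ℝ, 0 ≤ t ∧ ![0, (a : ℂ), I] i - F = t • fermatDual a i := by
    intro i _
    fin_cases i
    · refine ⟨a / D, by positivity, ?_⟩
      apply Complex.ext <;> simp [F, fermatDual] <;> ring
    · refine ⟨a * (1 + √3 * a) / D, by positivity, ?_⟩
      simp [F, fermatDual, Complex.ext_iff]
      field_simp
      linear_combination a ^ 2 * h3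
    · refine ⟨(a + √3) / D, by positivity, ?_⟩
      simp [F, fermatDual, Complex.ext_iff]
      constructor
      · ring
      · field_simp
        linear_combination a * h3
  have h := sum_inner_eq_sum_norm_mul_dist (sum_fermatDual a) hF
  rw [sum_inner_fermatDual ha] at h
  simp only [norm_fermatDual ha, ← mul_sum] at h
  refine ⟨F, ?_⟩
  simpa [Fin.sum_univ_three] using (mul_left_cancel₀ (by positivity) h).symm

end FermatPoint

section Rectangle

variable {a : ℝ}

noncomputable def rectCorner (a : ℝ) : Fin 4 → ℂ := ![0, a, I, a + I]

theorem one_le_dist_rectCorner (ha : 1 ≤ a) {i j : Fin 4} (hij : i ≠ j) :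
    1 ≤ dist (rectCorner a i) (rectCorner a j) := by
  rw [dist_eq_norm]
  have him := abs_im_le_norm (rectCorner a i - rectCorner a j)
  fin_cases i <;> fin_cases j <;> simp [rectCorner] at hij him ⊢ <;> linarith [le_abs_self a]

theorem sqrt_le_sum_dist_rectCorner (ha : 0 ≤ a) (z : ℂ) (i : Fin 4) :
    √(a ^ 2 + a * √3 + 1) ≤ ∑ j ∈ univ.erase i, dist z (rectCorner a j) := by
  -- any three corners are the image of `0, a, I` under a symmetry of the rectangle
  have hisom (f : ℂ ≃ᵢ ℂ) : √(a ^ 2 + a * √3 + 1) ≤ dist z (f 0) + dist z (f a) + dist z (f I) := by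
    simpa only [← f.dist_eq (f.symm z), f.apply_symm_apply] using
      sqrt_le_dist_add_dist_add_dist ha (f.symm z)
  rw [sum_erase_eq_sub (mem_univ i)]
  fin_cases i
  · have := hisom (IsometryEquiv.subLeft (a + I))
    simp [rectCorner, Fin.sum_univ_four] at this ⊢
    linarith
  · have := hisom (conjLIE.toIsometryEquiv.trans (IsometryEquiv.addRight I))
    simp [rectCorner, Fin.sum_univ_four] at this ⊢
    linarith
  · have := hisom (conjLIE.toIsometryEquiv.trans (IsometryEquiv.subLeft a))
    simp [rectCorner, Fin.sum_univ_four] at this ⊢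
    linarith
  · have := sqrt_le_dist_add_dist_add_dist ha z
    simp [rectCorner, Fin.sum_univ_four] at this ⊢
    linarith

theorem iInf_twoMedianCost_rectCorner (ha : 1 ≤ a) :
    ⨅ z : ℂ × ℂ, twoMedianCost (rectCorner a) z.1 z.2 =
      min 2 √(a ^ 2 + a * √3 + 1) := by
  have hbdd : BddBelow (Set.range fun z : ℂ × ℂ => twoMedianCost (rectCorner a) z.1 z.2) :=
    ⟨0, by rintro _ ⟨z, rfl⟩; exact twoMedianCost_nonneg _ _⟩
  refine le_antisymm (le_min ?_ ?_) (le_ciInf fun z => ?_)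
  · refine ciInf_le_of_le hbdd (I / 2, a + I / 2) <|
      (twoMedianCost_le_sum_dist ![I / 2, a + I / 2, I / 2, a + I / 2] ?_).trans ?_
    · intro i; fin_cases i <;> simp
    simp [rectCorner, Fin.sum_univ_four, dist_eq_re_im]
    norm_num
  · obtain ⟨F, hF⟩ := exists_dist_add_dist_add_dist_eq_sqrt (by linarith : 0 ≤ a)
    refine ciInf_le_of_le hbdd (F, a + I) <|
      (twoMedianCost_le_sum_dist ![F, F, F, a + I] ?_).trans ?_
    · intro i; fin_cases i <;> simp
    simp [rectCorner, Fin.sum_univ_four, ← hF]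
  · simpa using min_le_twoMedianCost (by simp) (fun _ _ => one_le_dist_rectCorner ha)
      (sqrt_le_sum_dist_rectCorner (by linarith)) z.1 z.2

end Rectangle

theorem d_eq_dist_equivRealProd_symm (X Y : ℝ × ℝ) :
    d X Y = dist (equivRealProd.symm X) (equivRealProd.symm Y) := by
  simp [d, dist_eq_re_im]

/-- For `a ≥ 1`, the optimal planar 2-median objective for the four corners
of an `a × 1` rectangle equals `min {2, √(a² + a√3 + 1)}`. -/
theorem two_median_rectangle (a : ℝ) (ha : 1 ≤ a) :
    (⨅ X : (ℝ × ℝ) × (ℝ × ℝ),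
        min (d X.1 (0, 0)) (d X.2 (0, 0)) + min (d X.1 (a, 0)) (d X.2 (a, 0)) +
          min (d X.1 (0, 1)) (d X.2 (0, 1)) + min (d X.1 (a, 1)) (d X.2 (a, 1))) =
      min 2 (Real.sqrt (a ^ 2 + a * Real.sqrt 3 + 1)) := by
  have hobj (X : (ℝ × ℝ) × (ℝ × ℝ)) :
      min (d X.1 (0, 0)) (d X.2 (0, 0)) + min (d X.1 (a, 0)) (d X.2 (a, 0)) +
          min (d X.1 (0, 1)) (d X.2 (0, 1)) + min (d X.1 (a, 1)) (d X.2 (a, 1)) =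
        twoMedianCost (rectCorner a) (equivRealProd.symm X.1) (equivRealProd.symm X.2) := by
    have h00 : equivRealProd.symm (0, 0) = 0 := by simp
    have ha0 : equivRealProd.symm (a, 0) = a := by simp
    have h01 : equivRealProd.symm (0, 1) = I := by simp
    have ha1 : equivRealProd.symm (a, 1) = a + I := by simp
    simp only [twoMedianCost, Fin.sum_univ_four, d_eq_dist_equivRealProd_symm, h00, ha0, h01, ha1]
    rfl
  simp_rw [hobj]
  rw [← iInf_twoMedianCost_rectCorner ha,
    ← (equivRealProd.symm.prodCongr equivRealProd.symm).iInf_comp]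
  rfl
end

section
/- Let S₁ and S₂ be disjoint nonempty finite sets of points in a real inner product space with |S₁| = m₁ ≥ 2 and |S₂| = m₂ ≥ 1, let x ∈ S₁, and let c₁ and c₂ be the centroids of S₁ and S₂ respectively. Define f(S) = ∑_{y ∈ S} ‖y − c(S)‖² for a nonempty finite set S with centroid c(S). If ‖x − c₂‖² < ((1 + 1/m₂)/(1 − 1/m₁)) · ‖x − c₁‖², then f(S₁ \ {x}) + f(S₂ ∪ {x}) < f(S₁) + f(S₂); that is, transferring x from cluster S₁ to cluster S₂ strictly decreases the total sum of squared distances of the points to their respective cluster centroids. -/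
variable {E : Type*} [NormedAddCommGroup E] [InnerProductSpace ℝ E]

/-- The centroid (arithmetic mean) of a finite set of points. -/
noncomputable def centroid (S : Finset E) : E :=
  (S.card : ℝ)⁻¹ • ∑ y ∈ S, y

/-- The squared-Euclidean cluster cost of a finite set of points:
the sum of squared distances of its points to its centroid. -/
noncomputable def cost (S : Finset E) : ℝ :=
  ∑ y ∈ S, ‖y - centroid S‖ ^ 2

/-! Removing `x` from a cluster of size `m` lowers its cost by `m/(m-1) · ‖x - c‖²`, and adding
`x` to a cluster of size `m` raises it by `m/(m+1) · ‖x - c‖²`, where `c` is the centroid of the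
cluster before the move. Both follow from the parallel axis (König–Huygens) identity
`∑ ‖y - b‖² = f(S) + |S| ‖c(S) - b‖²` together with the update rule for the centroid. The
hypothesis on `x` says exactly that the increase is smaller than the decrease. -/

theorem card_smul_centroid (S : Finset E) : (S.card : ℝ) • centroid S = ∑ y ∈ S, y := by
  rcases S.eq_empty_or_nonempty with rfl | hS
  · simp
  · rw [centroid, smul_smul, mul_inv_cancel₀ (by exact_mod_cast hS.card_pos.ne'), one_smul]

theorem sum_sub_centroid (S : Finset E) : ∑ y ∈ S, (y - centroid S) = 0 := by
  rw [Finset.sum_sub_distrib, Finset.sum_const, ← Nat.cast_smul_eq_nsmul ℝ, card_smul_centroid,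
    sub_self]

theorem sum_norm_sub_sq_eq_cost_add (S : Finset E) (b : E) :
    ∑ y ∈ S, ‖y - b‖ ^ 2 = cost S + S.card * ‖centroid S - b‖ ^ 2 := by
  have hsplit : ∀ y ∈ S, ‖y - b‖ ^ 2 = ‖y - centroid S‖ ^ 2 +
      2 * inner ℝ (y - centroid S) (centroid S - b) + ‖centroid S - b‖ ^ 2 := fun y _ => by
    rw [← norm_add_sq_real, sub_add_sub_cancel]
  rw [Finset.sum_congr rfl hsplit, Finset.sum_add_distrib, Finset.sum_add_distrib,
    ← Finset.mul_sum, ← sum_inner, sum_sub_centroid, inner_zero_left, mul_zero, add_zero,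
    Finset.sum_const, nsmul_eq_mul, cost]

theorem centroid_insert [DecidableEq E] {S : Finset E} {x : E} (hx : x ∉ S) :
    centroid (insert x S) = ((S.card : ℝ) + 1)⁻¹ • (x + (S.card : ℝ) • centroid S) := by
  rw [centroid, Finset.card_insert_of_notMem hx, Finset.sum_insert hx, card_smul_centroid,
    Nat.cast_succ]

theorem sub_centroid_insert [DecidableEq E] {S : Finset E} {x : E} (hx : x ∉ S) :
    x - centroid (insert x S) = ((S.card : ℝ) / (S.card + 1)) • (x - centroid S) := by
  rw [centroid_insert hx]
  match_scalars
  · field_simp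
    ring
  · field_simp

theorem cost_insert [DecidableEq E] {S : Finset E} {x : E} (hx : x ∉ S) :
    cost (insert x S) = cost S + S.card / (S.card + 1) * ‖x - centroid S‖ ^ 2 := by
  have hshift : centroid (insert x S) - centroid S = ((S.card : ℝ) + 1)⁻¹ • (x - centroid S) := by
    rw [centroid_insert hx]
    match_scalars
    · field_simp
    · field_simp
      ring
  have hpa := sum_norm_sub_sq_eq_cost_add (insert x S) (centroid S)
  rw [Finset.sum_insert hx, ← cost, Finset.card_insert_of_notMem hx, hshift, norm_smul,
    mul_pow, Real.norm_eq_abs, sq_abs] at hpa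
  push_cast at hpa
  have hcoef : ((S.card : ℝ) + 1) * (((S.card : ℝ) + 1)⁻¹ ^ 2 * ‖x - centroid S‖ ^ 2) =
      (1 - S.card / (S.card + 1)) * ‖x - centroid S‖ ^ 2 := by
    field_simp
    ring
  linarith

theorem cost_eq_cost_erase_add [DecidableEq E] {S : Finset E} {x : E} (hx : x ∈ S)
    (hS : 1 < S.card) :
    cost S = cost (S.erase x) + S.card / (S.card - 1) * ‖x - centroid S‖ ^ 2 := by
  obtain ⟨T, hxT, rfl⟩ : ∃ T, x ∉ T ∧ S = insert x T :=
    ⟨S.erase x, Finset.notMem_erase x S, (Finset.insert_erase hx).symm⟩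
  rw [Finset.card_insert_of_notMem hxT] at hS ⊢
  have hT : (T.card : ℝ) ≠ 0 := by exact_mod_cast (Nat.lt_of_succ_lt_succ hS).ne'
  rw [Finset.erase_insert hxT, cost_insert hxT, sub_centroid_insert hxT, norm_smul, mul_pow,
    Real.norm_eq_abs, sq_abs]
  push_cast
  rw [add_sub_cancel_right]
  field_simp

/-- If `x ∈ S₁`, `|S₁| = m₁ ≥ 2`, `|S₂| = m₂ ≥ 1`, and the squared distance from `x`
to the centroid of `S₂` is less than `((1 + 1/m₂)/(1 − 1/m₁))` times the squared
distance from `x` to the centroid of `S₁`, then transferring `x` from `S₁` to `S₂`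
strictly decreases the total sum of squared distances to the cluster centroids. -/
theorem transfer_decreases_cost [DecidableEq E]
    (S₁ S₂ : Finset E) (hdisj : Disjoint S₁ S₂)
    (m₁ m₂ : ℕ) (hm₁ : S₁.card = m₁) (hm₂ : S₂.card = m₂)
    (hm₁' : 2 ≤ m₁) (hm₂' : 1 ≤ m₂)
    (x : E) (hx : x ∈ S₁)
    (h : ‖x - centroid S₂‖ ^ 2 <
      (1 + 1 / (m₂ : ℝ)) / (1 - 1 / (m₁ : ℝ)) * ‖x - centroid S₁‖ ^ 2) :
    cost (S₁.erase x) + cost (insert x S₂) < cost S₁ + cost S₂ := by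
  have hx₂ : x ∉ S₂ := Finset.disjoint_left.mp hdisj hx
  rw [cost_eq_cost_erase_add hx (by omega), cost_insert hx₂, hm₁, hm₂]
  have hm₁r : (2 : ℝ) ≤ m₁ := by exact_mod_cast hm₁'
  have hm₂r : (1 : ℝ) ≤ m₂ := by exact_mod_cast hm₂'
  have hcoef : (m₂ : ℝ) / (m₂ + 1) * ((1 + 1 / (m₂ : ℝ)) / (1 - 1 / (m₁ : ℝ))) =
      m₁ / (m₁ - 1) := by
    field_simp
  have hgain : (m₂ : ℝ) / (m₂ + 1) * ‖x - centroid S₂‖ ^ 2 <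
      m₁ / (m₁ - 1) * ‖x - centroid S₁‖ ^ 2 := by
    rw [← hcoef, mul_assoc]
    exact mul_lt_mul_of_pos_left h (by positivity)
  linarith
end
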